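/- arXiv:2507.00276 — 2 statements merged into one kernel-verified Lean document; each statement's English description precedes it below -/
import Mathlib

section
/- Let f be a real-valued function on disorder configurations that is gauge invariant, i.e. f(τ^σ) = f(τ) for all τ and all σ : V → {−1, 1}. Then for all real γ and β_p, Σ_τ Z_τ(γ) · (exp(β_p·Σ_{e∈E} τ(e)) / Z_τ(β_p)) · f(τ) = (1/2^N) · Σ_τ Z_τ(γ)·f(τ); in particular the left-hand side does not depend on β_p. -/
open Finset

/-- Ising energy `H_τ(S) = Σ_e τ(e)·S(i(e))·S(j(e))`, spins valued in `ℤˣ = {−1, 1}`. -/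
noncomputable def isingH {V E : Type*} [Fintype E] (i j : E → V)
    (τ : E → ℤˣ) (S : V → ℤˣ) : ℝ :=
  ∑ e, ((τ e : ℤ) : ℝ) * ((S (i e) : ℤ) : ℝ) * ((S (j e) : ℤ) : ℝ)

/-- Partition function `Z_τ(β) = Σ_S exp(β·H_τ(S))`. -/
noncomputable def isingZ {V E : Type*} [Fintype V] [DecidableEq V] [Fintype E]
    (i j : E → V) (β : ℝ) (τ : E → ℤˣ) : ℝ :=
  ∑ S : V → ℤˣ, Real.exp (β * isingH i j τ S)

/-- Gauge transform `τ^σ(e) = τ(e)·σ(i(e))·σ(j(e))`. -/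
def gaugeT {V E : Type*} (i j : E → V) (σ : V → ℤˣ) (τ : E → ℤˣ) : E → ℤˣ :=
  fun e => τ e * σ (i e) * σ (j e)

lemma mulσ_invol {V : Type*} (σ : V → ℤˣ) :
    Function.Involutive (fun S : V → ℤˣ => fun v => σ v * S v) := by
  intro S; funext v
  simp [← mul_assoc, Int.units_mul_self]

lemma gauge_invol {V E : Type*} (i j : E → V) (σ : V → ℤˣ) :
    Function.Involutive (gaugeT i j σ) := by
  intro τ; funext e
  simp only [gaugeT]
  apply Units.ext
  have h1 : ((σ (i e) : ℤˣ) : ℤ) * ((σ (i e) : ℤˣ) : ℤ) = 1 := by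
    rw [← Units.val_mul, Int.units_mul_self]; rfl
  have h2 : ((σ (j e) : ℤˣ) : ℤ) * ((σ (j e) : ℤˣ) : ℤ) = 1 := by
    rw [← Units.val_mul, Int.units_mul_self]; rfl
  push_cast
  linear_combination (((τ e : ℤˣ) : ℤ) * ((σ (j e) : ℤˣ) : ℤ) * ((σ (j e) : ℤˣ) : ℤ)) * h1
    + ((τ e : ℤˣ) : ℤ) * h2

lemma isingH_gauge {V E : Type*} [Fintype E] (i j : E → V) (σ : V → ℤˣ) (τ : E → ℤˣ)
    (S : V → ℤˣ) :
    isingH i j (gaugeT i j σ τ) S = isingH i j τ (fun v => σ v * S v) := by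
  unfold isingH gaugeT
  refine Finset.sum_congr rfl fun e _ => ?_
  push_cast
  ring

lemma isingZ_gauge {V E : Type*} [Fintype V] [DecidableEq V] [Fintype E]
    (i j : E → V) (β : ℝ) (σ : V → ℤˣ) (τ : E → ℤˣ) :
    isingZ i j β (gaugeT i j σ τ) = isingZ i j β τ := by
  unfold isingZ
  rw [← Function.Bijective.sum_comp (mulσ_invol σ).bijective
    (fun S => Real.exp (β * isingH i j τ S))]
  exact Finset.sum_congr rfl fun S _ => by rw [isingH_gauge]

lemma sum_gauge {V E : Type*} [Fintype E] (i j : E → V) (σ : V → ℤˣ) (τ : E → ℤˣ) :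
    ∑ e, ((gaugeT i j σ τ e : ℤ) : ℝ) = isingH i j τ σ := by
  unfold isingH gaugeT
  refine Finset.sum_congr rfl fun e _ => ?_
  push_cast
  ring

lemma isingZ_pos {V E : Type*} [Fintype V] [DecidableEq V] [Fintype E]
    (i j : E → V) (β : ℝ) (τ : E → ℤˣ) : 0 < isingZ i j β τ :=
  Finset.sum_pos (fun S _ => Real.exp_pos _) ⟨fun _ => 1, Finset.mem_univ _⟩

/-- averages of gauge-invariant quantities under the correlated-disorder
weight do not depend on β_p. -/
theorem stmt_2 {V E : Type*} [Fintype V] [DecidableEq V] [Fintype E] [DecidableEq E]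
    (i j : E → V) (hij : ∀ e, i e ≠ j e)
    (f : (E → ℤˣ) → ℝ)
    (hf : ∀ (τ : E → ℤˣ) (σ : V → ℤˣ), f (gaugeT i j σ τ) = f τ)
    (γ βp : ℝ) :
    ∑ τ : E → ℤˣ,
        isingZ i j γ τ * (Real.exp (βp * ∑ e, ((τ e : ℤ) : ℝ)) / isingZ i j βp τ) * f τ
      = (1 / 2 ^ (Fintype.card V)) * ∑ τ : E → ℤˣ, isingZ i j γ τ * f τ := by
  set T : (E → ℤˣ) → ℝ := fun τ =>
    isingZ i j γ τ * (Real.exp (βp * ∑ e, ((τ e : ℤ) : ℝ)) / isingZ i j βp τ) * f τ with hT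
  have cardV : (Fintype.card (V → ℤˣ) : ℝ) = 2 ^ (Fintype.card V) := by
    simp [Fintype.card_fun]
  -- LHS is invariant under gauge reindexing
  have key : ∀ σ : V → ℤˣ, ∑ τ : E → ℤˣ, T τ = ∑ τ : E → ℤˣ, T (gaugeT i j σ τ) :=
    fun σ => (Function.Bijective.sum_comp (gauge_invol i j σ).bijective T).symm
  -- average over σ
  have h1 : (Fintype.card (V → ℤˣ) : ℝ) * (∑ τ : E → ℤˣ, T τ)
      = ∑ τ : E → ℤˣ, isingZ i j γ τ * f τ := by
    calc (Fintype.card (V → ℤˣ) : ℝ) * (∑ τ : E → ℤˣ, T τ)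
        = ∑ σ : V → ℤˣ, ∑ τ : E → ℤˣ, T (gaugeT i j σ τ) := by
          rw [Finset.sum_congr rfl (fun σ _ => (key σ).symm), Finset.sum_const,
            nsmul_eq_mul, Finset.card_univ]
      _ = ∑ τ : E → ℤˣ, ∑ σ : V → ℤˣ, T (gaugeT i j σ τ) := Finset.sum_comm
      _ = ∑ τ : E → ℤˣ, isingZ i j γ τ * f τ := by
          refine Finset.sum_congr rfl fun τ _ => ?_
          have : ∀ σ : V → ℤˣ, T (gaugeT i j σ τ)
              = isingZ i j γ τ * f τ / isingZ i j βp τ * Real.exp (βp * isingH i j τ σ) := by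
            intro σ
            simp only [hT, isingZ_gauge, hf, sum_gauge]
            ring
          rw [Finset.sum_congr rfl (fun σ _ => this σ), ← Finset.mul_sum]
          have hZ : ∑ σ : V → ℤˣ, Real.exp (βp * isingH i j τ σ) = isingZ i j βp τ := rfl
          rw [hZ, mul_comm, mul_div_assoc', mul_comm, mul_div_assoc,
            div_self (ne_of_gt (isingZ_pos i j βp τ)), mul_one]
  have hc : (Fintype.card (V → ℤˣ) : ℝ) ≠ 0 := by positivity
  rw [eq_comm, one_div, inv_mul_eq_iff_eq_mul₀ (by positivity), ← h1, ← cardV]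
end

section
/- For every real β, the internal energy on the Nishimori line of the Gaussian Edwards–Anderson model satisfies the exact identity exp(−N_B·β²/2) · ∫_{ℝ^E} exp(β·Σ_{e∈E} J(e)) · (Σ_S H_J(S)·exp(β·H_J(S))) / Z_J(β) dμ(J) = N_B · β. -/
open Finset MeasureTheory ProbabilityTheory

/-- Gaussian-disorder Ising energy H_J(S), spins valued in the units of the integers. -/
noncomputable def isingHJ {V E : Type*} [Fintype E] (i j : E → V)
    (J : E → ℝ) (S : V → ℤˣ) : ℝ :=
  ∑ e, J e * ((S (i e) : ℤ) : ℝ) * ((S (j e) : ℤ) : ℝ)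

/-- Gaussian-disorder partition function Z_J(β). -/
noncomputable def isingZJ {V E : Type*} [Fintype V] [DecidableEq V] [Fintype E]
    (i j : E → V) (β : ℝ) (J : E → ℝ) : ℝ :=
  ∑ S : V → ℤˣ, Real.exp (β * isingHJ i j J S)

/-! For a spin configuration τ, the gauge transformation J(e) ↦ τ(i e) τ(j e) J(e) preserves the
law of the disorder and maps H_J(S) to H_J(τS). It therefore fixes Z_J and the numerator
Σ_S H_J(S) e^{βH_J(S)}, while it turns Σ_e J(e) into H_J(τ). Averaging the integral over all 2^N
gauges thus replaces the factor e^{β Σ_e J(e)} by Z_J / 2^N, which cancels the denominator, and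
leaves 2^{-N} Σ_S E[H_J(S) e^{βH_J(S)}]. Up to signs each H_J(S) is a sum of N_B independent
standard Gaussians, so its moment generating function is t ↦ e^{N_B t²/2}, whose derivative at β
is N_B β e^{N_B β²/2}. -/

open scoped NNReal

lemma abs_le_exp_add_exp_neg (x : ℝ) : |x| ≤ Real.exp x + Real.exp (-x) :=
  calc |x| ≤ Real.exp |x| := by linarith [Real.add_one_le_exp |x|]
    _ ≤ Real.exp x + Real.exp (-x) := by
      rcases abs_choice x with h | h <;> rw [h] <;> linarith [Real.exp_pos x, Real.exp_pos (-x)]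

lemma abs_sum_mul_div_sum_le {α : Type*} [Fintype α] (a w : α → ℝ) (hw : ∀ x, 0 < w x) :
    |(∑ x, a x * w x) / ∑ x, w x| ≤ ∑ x, |a x| := by
  have hw_sum : 0 ≤ ∑ x, w x := sum_nonneg fun x _ => (hw x).le
  rw [abs_div, abs_of_nonneg hw_sum]
  refine div_le_of_le_mul₀ hw_sum (sum_nonneg fun x _ => abs_nonneg _) ?_
  calc |∑ x, a x * w x| ≤ ∑ x, |a x| * w x := by
        refine (abs_sum_le_sum_abs _ _).trans (le_of_eq ?_)
        simp_rw [abs_mul, abs_of_pos (hw _)]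
    _ ≤ ∑ x, |a x| * ∑ y, w y := by
        gcongr with x
        exact single_le_sum (fun y _ => (hw y).le) (mem_univ x)
    _ = (∑ x, |a x|) * ∑ y, w y := (sum_mul _ _ _).symm

section MGF

variable {Ω : Type*} {mΩ : MeasurableSpace Ω} {μ : Measure Ω} [NeZero μ] {X : Ω → ℝ} {v : ℝ}

lemma integrableExpSet_eq_univ_of_mgf_eq (hX : mgf X μ = fun t => Real.exp (v * t ^ 2 / 2)) :
    integrableExpSet X μ = Set.univ := by
  ext t
  simp only [integrableExpSet, Set.mem_ofPred_eq, Set.mem_univ, iff_true]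
  rw [← mgf_pos_iff, hX]
  exact Real.exp_pos _

lemma integrable_mul_exp_of_mgf_eq (hX : mgf X μ = fun t => Real.exp (v * t ^ 2 / 2)) (t : ℝ) :
    Integrable (fun ω => X ω * Real.exp (t * X ω)) μ := by
  have ht : t ∈ interior (integrableExpSet X μ) := by simp [integrableExpSet_eq_univ_of_mgf_eq hX]
  simpa using integrable_pow_mul_exp_of_mem_interior_integrableExpSet ht 1

lemma integral_mul_exp_of_mgf_eq (hX : mgf X μ = fun t => Real.exp (v * t ^ 2 / 2)) (t : ℝ) :
    ∫ ω, X ω * Real.exp (t * X ω) ∂μ = v * t * Real.exp (v * t ^ 2 / 2) := by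
  have ht : t ∈ interior (integrableExpSet X μ) := by simp [integrableExpSet_eq_univ_of_mgf_eq hX]
  have hderiv : HasDerivAt (mgf X μ) (v * t * Real.exp (v * t ^ 2 / 2)) t := by
    rw [hX]
    convert ((hasDerivAt_pow 2 t).const_mul v |>.div_const 2).exp using 1
    ring
  exact (hasDerivAt_mgf ht).unique hderiv

end MGF

section GaussianVector

variable {ι : Type*} [Fintype ι]

lemma measurePreserving_units_mul_gaussianReal (ε : ℤˣ) (v : ℝ≥0) :
    MeasurePreserving (fun x : ℝ => ((ε : ℤ) : ℝ) * x) (gaussianReal 0 v) (gaussianReal 0 v) := by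
  rcases Int.units_eq_one_or ε with rfl | rfl
  · simp only [Units.val_one, Int.cast_one, one_mul]
    exact MeasurePreserving.id _
  · refine ⟨by fun_prop, ?_⟩
    simpa using gaussianReal_map_neg (μ := 0) (v := v)

lemma measurePreserving_pi_units_mul_gaussianReal (ε : ι → ℤˣ) (v : ℝ≥0) :
    MeasurePreserving (fun (x : ι → ℝ) k => ((ε k : ℤ) : ℝ) * x k)
      (Measure.pi fun _ : ι => gaussianReal 0 v) (Measure.pi fun _ : ι => gaussianReal 0 v) :=
  measurePreserving_pi _ _ fun k => measurePreserving_units_mul_gaussianReal (ε k) v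

lemma integrable_exp_sum_mul (c : ι → ℝ) :
    Integrable (fun x : ι → ℝ => Real.exp (∑ k, c k * x k))
      (Measure.pi fun _ : ι => gaussianReal 0 1) := by
  simp_rw [Real.exp_sum]
  exact Integrable.fintype_prod fun k => integrable_exp_mul_gaussianReal (c k)

lemma mgf_sum_mul_pi_gaussianReal (c : ι → ℝ) :
    mgf (fun x : ι → ℝ => ∑ k, c k * x k) (Measure.pi fun _ : ι => gaussianReal 0 1)
      = fun t => Real.exp ((∑ k, c k ^ 2) * t ^ 2 / 2) := by
  ext t
  have hcoord (k : ι) :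
      ∫ y, Real.exp (t * c k * y) ∂gaussianReal 0 1 = Real.exp (c k ^ 2 * t ^ 2 / 2) := by
    simpa [mgf, mul_pow, mul_comm] using
      congrFun (mgf_id_gaussianReal (μ := 0) (v := 1)) (t * c k)
  simp_rw [mgf, mul_sum, Real.exp_sum, ← mul_assoc]
  rw [integral_fintype_prod_eq_prod (fun k y => Real.exp (t * c k * y))]
  simp_rw [hcoord, ← Real.exp_sum, sum_mul, sum_div]

end GaussianVector

section Gauge

variable {V E : Type*} (i j : E → V)

def bondSign (S : V → ℤˣ) (e : E) : ℤˣ := S (i e) * S (j e)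

lemma bondSign_mul (τ S : V → ℤˣ) (e : E) :
    bondSign i j (τ * S) e = bondSign i j τ e * bondSign i j S e :=
  mul_mul_mul_comm _ _ _ _

def gaugeDisorder (τ : V → ℤˣ) (J : E → ℝ) (e : E) : ℝ := ((bondSign i j τ e : ℤ) : ℝ) * J e

lemma gaugeDisorder_involutive (τ : V → ℤˣ) : Function.Involutive (gaugeDisorder i j τ) := by
  intro J
  funext e
  simp only [gaugeDisorder, ← mul_assoc, ← Int.cast_mul, ← Units.val_mul, Int.units_mul_self,
    Units.val_one, Int.cast_one, one_mul]

variable [Fintype E]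

lemma measurePreserving_gaugeDisorder (τ : V → ℤˣ) :
    MeasurePreserving (gaugeDisorder i j τ) (Measure.pi fun _ : E => gaussianReal 0 1)
      (Measure.pi fun _ : E => gaussianReal 0 1) :=
  measurePreserving_pi_units_mul_gaussianReal (bondSign i j τ) 1

lemma integral_comp_gaugeDisorder (τ : V → ℤˣ) (F : (E → ℝ) → ℝ) :
    ∫ J, F (gaugeDisorder i j τ J) ∂(Measure.pi fun _ : E => gaussianReal 0 1)
      = ∫ J, F J ∂(Measure.pi fun _ : E => gaussianReal 0 1) :=
  (measurePreserving_gaugeDisorder i j τ).integral_comp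
    (MeasurableEquiv.ofInvolutive _ (gaugeDisorder_involutive i j τ)
      (measurePreserving_gaugeDisorder i j τ).measurable).measurableEmbedding F

lemma isingHJ_eq_sum_bondSign_mul (J : E → ℝ) (S : V → ℤˣ) :
    isingHJ i j J S = ∑ e, ((bondSign i j S e : ℤ) : ℝ) * J e := by
  refine sum_congr rfl fun e _ => ?_
  push_cast [bondSign]
  ring

lemma sum_gaugeDisorder (τ : V → ℤˣ) (J : E → ℝ) :
    ∑ e, gaugeDisorder i j τ J e = isingHJ i j J τ :=
  (isingHJ_eq_sum_bondSign_mul i j J τ).symm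

lemma isingHJ_gaugeDisorder (τ S : V → ℤˣ) (J : E → ℝ) :
    isingHJ i j (gaugeDisorder i j τ J) S = isingHJ i j J (τ * S) := by
  simp only [isingHJ_eq_sum_bondSign_mul, gaugeDisorder, bondSign_mul, Units.val_mul,
    Int.cast_mul]
  exact sum_congr rfl fun e _ => by ring

variable [Fintype V] [DecidableEq V]

lemma sum_comp_isingHJ_gaugeDisorder {M : Type*} [AddCommMonoid M] (f : ℝ → M) (τ : V → ℤˣ)
    (J : E → ℝ) :
    ∑ S, f (isingHJ i j (gaugeDisorder i j τ J) S) = ∑ S, f (isingHJ i j J S) := by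
  simp_rw [isingHJ_gaugeDisorder]
  exact Equiv.sum_comp (Equiv.mulLeft τ) fun S => f (isingHJ i j J S)

lemma isingZJ_gaugeDisorder (β : ℝ) (τ : V → ℤˣ) (J : E → ℝ) :
    isingZJ i j β (gaugeDisorder i j τ J) = isingZJ i j β J :=
  sum_comp_isingHJ_gaugeDisorder i j (fun h => Real.exp (β * h)) τ J

end Gauge

section Energy

variable {V E : Type*} [Fintype E] (i j : E → V) (β : ℝ)

lemma measurable_isingHJ (S : V → ℤˣ) : Measurable fun J => isingHJ i j J S := by
  unfold isingHJ
  fun_prop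

lemma integrable_exp_mul_isingHJ_add (a b : ℝ) (τ S : V → ℤˣ) :
    Integrable (fun J => Real.exp (a * isingHJ i j J τ + b * isingHJ i j J S))
      (Measure.pi fun _ : E => gaussianReal 0 1) := by
  simp_rw [isingHJ_eq_sum_bondSign_mul, mul_sum, ← sum_add_distrib, ← mul_assoc, ← add_mul]
  exact integrable_exp_sum_mul _

lemma mgf_isingHJ (S : V → ℤˣ) :
    mgf (fun J => isingHJ i j J S) (Measure.pi fun _ : E => gaussianReal 0 1)
      = fun t => Real.exp (Fintype.card E * t ^ 2 / 2) := by
  have hsq (ε : ℤˣ) : ((ε : ℤ) : ℝ) ^ 2 = 1 := by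
    rw [← Int.cast_pow, ← Units.val_pow_eq_pow_val, Int.units_sq, Units.val_one, Int.cast_one]
  simp_rw [isingHJ_eq_sum_bondSign_mul, mgf_sum_mul_pi_gaussianReal]
  simp [hsq]

lemma integrable_isingHJ_mul_exp (S : V → ℤˣ) :
    Integrable (fun J => isingHJ i j J S * Real.exp (β * isingHJ i j J S))
      (Measure.pi fun _ : E => gaussianReal 0 1) :=
  integrable_mul_exp_of_mgf_eq (mgf_isingHJ i j S) β

lemma integral_isingHJ_mul_exp (S : V → ℤˣ) :
    ∫ J, isingHJ i j J S * Real.exp (β * isingHJ i j J S)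
        ∂(Measure.pi fun _ : E => gaussianReal 0 1)
      = Fintype.card E * β * Real.exp (Fintype.card E * β ^ 2 / 2) :=
  integral_mul_exp_of_mgf_eq (mgf_isingHJ i j S) β

variable [Fintype V] [DecidableEq V]

lemma isingZJ_pos (J : E → ℝ) : 0 < isingZJ i j β J :=
  sum_pos (fun _ _ => Real.exp_pos _) univ_nonempty

lemma integral_sum_isingHJ_mul_exp :
    ∫ J, ∑ S, isingHJ i j J S * Real.exp (β * isingHJ i j J S)
        ∂(Measure.pi fun _ : E => gaussianReal 0 1)
      = Fintype.card (V → ℤˣ) * (Fintype.card E * β * Real.exp (Fintype.card E * β ^ 2 / 2)) := by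
  rw [integral_finsetSum _ fun S _ => integrable_isingHJ_mul_exp i j β S]
  simp_rw [integral_isingHJ_mul_exp, sum_const, card_univ, nsmul_eq_mul]

end Energy

section Nishimori

variable {V E : Type*} [Fintype V] [DecidableEq V] [Fintype E] (i j : E → V) (β : ℝ)

lemma integral_nishimori_eq_integral_gauged (τ : V → ℤˣ) :
    ∫ J, Real.exp (β * ∑ e, J e) *
        ((∑ S, isingHJ i j J S * Real.exp (β * isingHJ i j J S)) / isingZJ i j β J)
        ∂(Measure.pi fun _ : E => gaussianReal 0 1)
      = ∫ J, Real.exp (β * isingHJ i j J τ) *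
        ((∑ S, isingHJ i j J S * Real.exp (β * isingHJ i j J S)) / isingZJ i j β J)
        ∂(Measure.pi fun _ : E => gaussianReal 0 1) := by
  rw [← integral_comp_gaugeDisorder i j τ]
  congr 1 with J
  rw [sum_gaugeDisorder, isingZJ_gaugeDisorder,
    sum_comp_isingHJ_gaugeDisorder i j (fun h => h * Real.exp (β * h))]

lemma integrable_gauged_nishimori (τ : V → ℤˣ) :
    Integrable (fun J => Real.exp (β * isingHJ i j J τ) *
        ((∑ S, isingHJ i j J S * Real.exp (β * isingHJ i j J S)) / isingZJ i j β J))
      (Measure.pi fun _ : E => gaussianReal 0 1) := by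
  have hmeas := measurable_isingHJ (E := E) i j
  refine Integrable.mono'
    (g := fun J => ∑ S, (Real.exp (β * isingHJ i j J τ + 1 * isingHJ i j J S)
      + Real.exp (β * isingHJ i j J τ + (-1) * isingHJ i j J S)))
    (integrable_finsetSum _ fun S _ => (integrable_exp_mul_isingHJ_add i j β 1 τ S).add
      (integrable_exp_mul_isingHJ_add i j β (-1) τ S))
    (by unfold isingZJ; fun_prop) (ae_of_all _ fun J => ?_)
  rw [Real.norm_eq_abs, abs_mul, abs_of_pos (Real.exp_pos _)]
  calc Real.exp (β * isingHJ i j J τ) *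
        |(∑ S, isingHJ i j J S * Real.exp (β * isingHJ i j J S)) / isingZJ i j β J|
      ≤ Real.exp (β * isingHJ i j J τ) * ∑ S, |isingHJ i j J S| := by
        gcongr
        exact abs_sum_mul_div_sum_le _ _ fun S => Real.exp_pos _
    _ ≤ Real.exp (β * isingHJ i j J τ) *
        ∑ S, (Real.exp (isingHJ i j J S) + Real.exp (-isingHJ i j J S)) := by
        gcongr with S
        exact abs_le_exp_add_exp_neg _
    _ = _ := by simp_rw [mul_sum, mul_add, ← Real.exp_add, one_mul, neg_one_mul]

lemma card_mul_integral_nishimori :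
    Fintype.card (V → ℤˣ) * ∫ J, Real.exp (β * ∑ e, J e) *
        ((∑ S, isingHJ i j J S * Real.exp (β * isingHJ i j J S)) / isingZJ i j β J)
        ∂(Measure.pi fun _ : E => gaussianReal 0 1)
      = ∫ J, ∑ S, isingHJ i j J S * Real.exp (β * isingHJ i j J S)
        ∂(Measure.pi fun _ : E => gaussianReal 0 1) := by
  calc _ = ∑ τ : V → ℤˣ, ∫ J, Real.exp (β * isingHJ i j J τ) *
          ((∑ S, isingHJ i j J S * Real.exp (β * isingHJ i j J S)) / isingZJ i j β J)
          ∂(Measure.pi fun _ : E => gaussianReal 0 1) := by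
        simp_rw [← integral_nishimori_eq_integral_gauged i j β, sum_const, card_univ,
          nsmul_eq_mul]
    _ = _ := by
        rw [← integral_finsetSum _ fun τ _ => integrable_gauged_nishimori i j β τ]
        refine integral_congr_ae (ae_of_all _ fun J => ?_)
        dsimp only
        rw [← sum_mul]
        exact mul_div_cancel₀ _ (isingZJ_pos i j β J).ne'

end Nishimori

theorem stmt_19_general {V E : Type*} [Fintype V] [DecidableEq V] [Fintype E]
    (i j : E → V)
    (β : ℝ) :
    Real.exp (-(Fintype.card E : ℝ) * β ^ 2 / 2) *
        ∫ J : E → ℝ,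
          Real.exp (β * ∑ e, J e) *
            ((∑ S : V → ℤˣ, isingHJ i j J S * Real.exp (β * isingHJ i j J S)) /
              isingZJ i j β J)
          ∂(Measure.pi fun _ : E => gaussianReal 0 1)
      = (Fintype.card E : ℝ) * β := by
  have hcard : (Fintype.card (V → ℤˣ) : ℝ) ≠ 0 := by positivity
  have h := card_mul_integral_nishimori i j β
  rw [integral_sum_isingHJ_mul_exp, mul_right_inj' hcard] at h
  rw [h, mul_left_comm, ← Real.exp_add, neg_mul, neg_div, neg_add_cancel, Real.exp_zero,
    mul_one]

/-- internal energy on the Nishimori line of the Gaussian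
Edwards-Anderson model. -/
theorem stmt_19 {V E : Type*} [Fintype V] [DecidableEq V] [Fintype E] [DecidableEq E]
    (i j : E → V) (hij : ∀ e, i e ≠ j e)
    (β : ℝ) :
    Real.exp (-(Fintype.card E : ℝ) * β ^ 2 / 2) *
        ∫ J : E → ℝ,
          Real.exp (β * ∑ e, J e) *
            ((∑ S : V → ℤˣ, isingHJ i j J S * Real.exp (β * isingHJ i j J S)) /
              isingZJ i j β J)
          ∂(Measure.pi fun _ : E => gaussianReal 0 1)
      = (Fintype.card E : ℝ) * β :=
  stmt_19_general i j β
end
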